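/- arXiv:math/0412041 — 2 statements merged into one kernel-verified Lean document; each statement's English description precedes it below -/
import Mathlib

section
/- For n ≥ 1, the n-th large Schröder number r_n equals twice the n-th small Schröder number s_n. -/
open Matrix

/-- A lattice point in the plane. -/
abbrev Pt := ℤ × ℤ

/-- The points visited by a path starting at `p` taking steps `l`. -/
def pts (p : Pt) (l : List Pt) : List Pt := l.scanl (· + ·) p

/-- The endpoint of a path starting at `p` taking steps `l`. -/
def endpt (p : Pt) (l : List Pt) : Pt := l.foldl (· + ·) p

/-- `l` is the step list of a large Schröder path from `p` to `q`:
steps are U=(1,1), D=(1,-1), L=(2,0) and the path never goes below the x-axis. -/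
def IsLargePath (p q : Pt) (l : List Pt) : Prop :=
  (∀ s ∈ l, s = (1, 1) ∨ s = (1, -1) ∨ s = (2, 0)) ∧
  (∀ v ∈ pts p l, 0 ≤ v.2) ∧
  endpt p l = q

/-- A small Schröder path: a large Schröder path with no level step on the x-axis. -/
def IsSmallPath (p q : Pt) (l : List Pt) : Prop :=
  IsLargePath p q l ∧
  ∀ (i : ℕ) (h : i < l.length), l.get ⟨i, h⟩ = (2, 0) → (endpt p (l.take i)).2 ≠ 0

/-- The `k`-th large Schröder number: the number of large Schröder paths
from `(0,0)` to `(2k,0)`. -/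
noncomputable def schR (k : ℕ) : ℕ := Nat.card {l : List Pt // IsLargePath (0, 0) (2 * k, 0) l}

/-- The `k`-th small Schröder number: the number of small Schröder paths
from `(0,0)` to `(2k,0)`. -/
noncomputable def schS (k : ℕ) : ℕ := Nat.card {l : List Pt // IsSmallPath (0, 0) (2 * k, 0) l}

/-- `Π n`: `n`-tuples of pairwise non-intersecting large Schröder paths where the
`i`-th path (1-indexed; here index `i : Fin n` stands for `i+1`) runs from
`(-2(i+1)+1, 0)` to `(2(i+1)-1, 0)`. -/
def PiSet (n : ℕ) : Set (Fin n → List Pt) :=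
  {π | (∀ i : Fin n, IsLargePath (-(2 * (i : ℤ) + 1), 0) (2 * (i : ℤ) + 1, 0) (π i)) ∧
    ∀ i j : Fin n, i ≠ j → ∀ v ∈ pts (-(2 * (i : ℤ) + 1), 0) (π i),
      v ∉ pts (-(2 * (j : ℤ) + 1), 0) (π j)}

/-- `Ω n`: the analogous tuples of small Schröder paths. -/
def OmegaSet (n : ℕ) : Set (Fin n → List Pt) :=
  {ω | (∀ i : Fin n, IsSmallPath (-(2 * (i : ℤ) + 1), 0) (2 * (i : ℤ) + 1, 0) (ω i)) ∧
    ∀ i j : Fin n, i ≠ j → ∀ v ∈ pts (-(2 * (i : ℤ) + 1), 0) (ω i),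
      v ∉ pts (-(2 * (j : ℤ) + 1), 0) (ω j)}

/-- `Π* n`: `n`-tuples `(μ₀,…,μ_{n-1})` of pairwise non-intersecting large Schröder
paths with `μ i` from `(-2i,0)` to `(2i,0)`. -/
def PiStarSet (n : ℕ) : Set (Fin n → List Pt) :=
  {μ | (∀ i : Fin n, IsLargePath (-(2 * (i : ℤ)), 0) (2 * (i : ℤ), 0) (μ i)) ∧
    ∀ i j : Fin n, i ≠ j → ∀ v ∈ pts (-(2 * (i : ℤ)), 0) (μ i),
      v ∉ pts (-(2 * (j : ℤ)), 0) (μ j)}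

/-- `Ω* n`: the analogous tuples of small Schröder paths. -/
def OmegaStarSet (n : ℕ) : Set (Fin n → List Pt) :=
  {μ | (∀ i : Fin n, IsSmallPath (-(2 * (i : ℤ)), 0) (2 * (i : ℤ), 0) (μ i)) ∧
    ∀ i j : Fin n, i ≠ j → ∀ v ∈ pts (-(2 * (i : ℤ)), 0) (μ i),
      v ∉ pts (-(2 * (j : ℤ)), 0) (μ j)}

/-- The unit square with lower-left corner `c` lies in the Aztec diamond `Az(n)`,
i.e. all four of its corners `(x,y)` satisfy `|x| + |y| ≤ n + 1`. -/
def aztecCell (n : ℕ) (c : Pt) : Prop :=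
  |c.1| + |c.2| ≤ (n : ℤ) + 1 ∧ |c.1 + 1| + |c.2| ≤ (n : ℤ) + 1 ∧
  |c.1| + |c.2 + 1| ≤ (n : ℤ) + 1 ∧ |c.1 + 1| + |c.2 + 1| ≤ (n : ℤ) + 1

/-- Two unit squares (given by lower-left corners) are edge-adjacent,
so together they form a 1×2 or 2×1 domino. -/
def adjCell (c d : Pt) : Prop :=
  d = (c.1 + 1, c.2) ∨ d = (c.1 - 1, c.2) ∨ d = (c.1, c.2 + 1) ∨ d = (c.1, c.2 - 1)

/-- A domino tiling of `Az(n)`, encoded as the involution matching each cell of the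
diamond with the other cell of its domino (and fixing everything outside). -/
def IsAztecTiling (n : ℕ) (m : Pt → Pt) : Prop :=
  (∀ c, aztecCell n c → aztecCell n (m c) ∧ adjCell c (m c) ∧ m (m c) = c) ∧
  ∀ c, ¬ aztecCell n c → m c = c

/-- The number of domino tilings of the Aztec diamond of order `n`. -/
noncomputable def aztecTilingCount (n : ℕ) : ℕ := Nat.card {m : Pt → Pt // IsAztecTiling n m}

/-- The map sending `(π₁,…,π_{n-1})` to `(μ₀,…,μ_{n-1})` with `μ₀` the empty path
at the origin and `μᵢ = U πᵢ D`. -/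
def extendStar {n : ℕ} (π : Fin (n - 1) → List Pt) (i : Fin n) : List Pt :=
  if h : (i : ℕ) = 0 then []
  else (1, 1) :: π ⟨(i : ℕ) - 1, by omega⟩ ++ [(1, -1)]

/-!
A large Schröder path from the axis to the axis either has no level step on the axis, and is
then small, or it has one. In the latter case cutting at the *last* such level step writes it
uniquely as `P L Q` with `P` a large path back to the axis and `Q` a small path. A nonempty small
path, on the other hand, starts with an up step, and cutting at its first return to the axis
writes it uniquely as `U P D Q` with `P` a large path (lifted by one) and `Q` small. Both kinds of
paths are therefore in bijection with the same pairs `(P, Q)`, so `r_n = s_n + s_n`.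
-/

theorem List.append_cons_eq_append_cons {α : Type*} {a : α} {P Q P' Q' : List α}
    (h : P ++ a :: Q = P' ++ a :: Q') :
    P = P' ∧ Q = Q' ∨ (∃ R, P' = P ++ a :: R ∧ Q = R ++ a :: Q') ∨
      ∃ R, P = P' ++ a :: R ∧ Q' = R ++ a :: Q := by
  rcases List.append_eq_append_iff.1 h with ⟨_ | ⟨b, R⟩, rfl, hQ⟩ | ⟨_ | ⟨b, R⟩, rfl, hQ⟩ <;>
    simp only [List.nil_append, List.cons_append, List.cons.injEq] at hQ
  · exact Or.inl ⟨(List.append_nil P).symm, hQ.2⟩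
  · exact Or.inr (Or.inl ⟨R, by rw [hQ.1], hQ.2⟩)
  · exact Or.inl ⟨List.append_nil P', hQ.2.symm⟩
  · exact Or.inr (Or.inr ⟨R, by rw [hQ.1], hQ.2⟩)

section

variable {p q s w : Pt} {l l₁ l₂ P Q : List Pt}

theorem pts_cons : pts p (s :: l) = p :: pts (p + s) l := List.scanl_cons

theorem endpt_cons : endpt p (s :: l) = endpt (p + s) l := rfl

theorem endpt_append : endpt p (l₁ ++ l₂) = endpt (endpt p l₁) l₂ := List.foldl_append

theorem mem_pts_append_of_mem (h : w ∈ pts p l₁) : w ∈ pts p (l₁ ++ l₂) := by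
  rw [pts, List.scanl_append]
  exact List.mem_append_left _ h

theorem start_mem_pts : p ∈ pts p l := by
  cases l <;> simp [pts]

theorem endpt_mem_pts : endpt p l ∈ pts p l := by
  induction l generalizing p with
  | nil => exact start_mem_pts
  | cons s l ih => exact pts_cons ▸ List.mem_cons_of_mem _ ih

theorem pts_add (v : Pt) : pts (p + v) l = (pts p l).map (· + v) := by
  induction l generalizing p with
  | nil => rfl
  | cons s l ih => rw [pts_cons, pts_cons, add_right_comm, ih, List.map_cons]

theorem endpt_add (v : Pt) : endpt (p + v) l = endpt p l + v := by
  induction l generalizing p with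
  | nil => rfl
  | cons s l ih => rw [endpt_cons, endpt_cons, add_right_comm, ih]

theorem isLargePath_nil : IsLargePath p q [] ↔ 0 ≤ p.2 ∧ p = q := by
  simp [IsLargePath, pts, endpt]

theorem isLargePath_cons :
    IsLargePath p q (s :: l) ↔
      (s = (1, 1) ∨ s = (1, -1) ∨ s = (2, 0)) ∧ 0 ≤ p.2 ∧ IsLargePath (p + s) q l := by
  simp only [IsLargePath, pts_cons, List.forall_mem_cons, endpt_cons]
  tauto

theorem IsLargePath.start_nonneg (h : IsLargePath p q l) : 0 ≤ p.2 :=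
  h.2.1 p start_mem_pts

theorem isLargePath_append :
    IsLargePath p q (l₁ ++ l₂) ↔
      IsLargePath p (endpt p l₁) l₁ ∧ IsLargePath (endpt p l₁) q l₂ := by
  induction l₁ generalizing p with
  | nil =>
    simp only [List.nil_append, isLargePath_nil, endpt, List.foldl_nil, and_true,
      iff_and_self]
    exact IsLargePath.start_nonneg
  | cons s l₁ ih =>
    simp only [List.cons_append, isLargePath_cons, ih, endpt_cons]
    tauto

theorem isLargePath_iff_lift (a : ℤ) :
    IsLargePath p q l ↔
      IsLargePath (p + (a, 1)) (q + (a, 1)) l ∧ ∀ w ∈ pts (p + (a, 1)) l, w.2 ≠ 0 := by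
  simp only [IsLargePath, pts_add, endpt_add, List.forall_mem_map, add_left_inj, Prod.snd_add]
  constructor
  · rintro ⟨hs, hnn, he⟩
    exact ⟨⟨hs, fun w hw => by linarith [hnn w hw], he⟩, fun w hw => by linarith [hnn w hw]⟩
  · rintro ⟨⟨hs, hnn, he⟩, hne⟩
    exact ⟨hs, fun w hw => by have := hnn w hw; have := hne w hw; omega, he⟩

theorem IsLargePath.exists_eq_append_down_cons (h : IsLargePath p q l) (hp : 1 ≤ p.2)
    (hq : q.2 = 0) :
    ∃ P Q, l = P ++ (1, -1) :: Q ∧ (endpt p P).2 = 1 ∧ ∀ w ∈ pts p P, w.2 ≠ 0 := by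
  induction l generalizing p with
  | nil =>
    obtain ⟨-, rfl⟩ := isLargePath_nil.1 h
    omega
  | cons s l ih =>
    obtain ⟨hs, -, hl⟩ := isLargePath_cons.1 h
    by_cases hdown : s = (1, -1) ∧ p.2 = 1
    · obtain ⟨rfl, hp1⟩ := hdown
      exact ⟨[], l, rfl, hp1, by simp [pts, hp1]⟩
    · have hps : 1 ≤ (p + s).2 := by
        rcases hs with rfl | rfl | rfl <;>
          simp only [Prod.snd_add, Prod.mk.injEq, true_and] at hdown ⊢ <;> omega
      obtain ⟨P, Q, rfl, hP1, hP⟩ := ih hl hps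
      refine ⟨s :: P, Q, rfl, hP1, ?_⟩
      rw [pts_cons, List.forall_mem_cons]
      exact ⟨by omega, hP⟩

def HasLevelStepOnAxis (p : Pt) (l : List Pt) : Prop :=
  ∃ l₁ l₂, l = l₁ ++ (2, 0) :: l₂ ∧ (endpt p l₁).2 = 0

theorem isSmallPath_iff :
    IsSmallPath p q l ↔ IsLargePath p q l ∧ ¬HasLevelStepOnAxis p l := by
  refine and_congr_right fun _ => ?_
  simp only [HasLevelStepOnAxis, not_exists, not_and, List.get_eq_getElem]
  constructor
  · rintro h l₁ l₂ rfl
    simpa using h l₁.length (by simp) (by simp)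
  · intro h i hi hlevel
    refine h _ (l.drop (i + 1)) ?_
    rw [← hlevel, List.getElem_cons_drop, List.take_append_drop]

theorem hasLevelStepOnAxis_cons :
    HasLevelStepOnAxis p (s :: l) ↔ s = (2, 0) ∧ p.2 = 0 ∨ HasLevelStepOnAxis (p + s) l := by
  constructor
  · rintro ⟨_ | ⟨a, l₁⟩, l₂, h, h0⟩ <;> simp only [List.nil_append, List.cons_append,
      List.cons.injEq] at h
    · exact Or.inl ⟨h.1, h0⟩
    · obtain ⟨rfl, rfl⟩ := h
      exact Or.inr ⟨l₁, l₂, rfl, h0⟩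
  · rintro (⟨rfl, h0⟩ | ⟨l₁, l₂, rfl, h0⟩)
    · exact ⟨[], l, rfl, h0⟩
    · exact ⟨s :: l₁, l₂, rfl, h0⟩

theorem hasLevelStepOnAxis_append :
    HasLevelStepOnAxis p (l₁ ++ l₂) ↔
      HasLevelStepOnAxis p l₁ ∨ HasLevelStepOnAxis (endpt p l₁) l₂ := by
  induction l₁ generalizing p with
  | nil => simp [HasLevelStepOnAxis, endpt]
  | cons s l₁ ih =>
    simp only [List.cons_append, hasLevelStepOnAxis_cons, ih, endpt_cons, or_assoc]

theorem HasLevelStepOnAxis.exists_mem_pts (h : HasLevelStepOnAxis p l) :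
    ∃ w ∈ pts p l, w.2 = 0 := by
  obtain ⟨l₁, l₂, rfl, h0⟩ := h
  exact ⟨_, mem_pts_append_of_mem endpt_mem_pts, h0⟩

theorem HasLevelStepOnAxis.exists_last (h : HasLevelStepOnAxis p l) :
    ∃ P Q, l = P ++ (2, 0) :: Q ∧ (endpt p P).2 = 0 ∧
      ¬HasLevelStepOnAxis (endpt p P + (2, 0)) Q := by
  induction hn : l.length using Nat.strong_induction_on generalizing p l with
  | _ n ih =>
    obtain ⟨P, Q, rfl, hP⟩ := h
    by_cases hQ : HasLevelStepOnAxis (endpt p P + (2, 0)) Q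
    · obtain ⟨P', Q', rfl, hP', hQ'⟩ := ih Q.length (by simp at hn; omega) hQ rfl
      refine ⟨P ++ (2, 0) :: P', Q', by simp, ?_, ?_⟩ <;> rwa [endpt_append, endpt_cons]
    · exact ⟨P, Q, rfl, hP, hQ⟩

variable {x : ℤ}

theorem IsLargePath.append_level_cons (hP : IsLargePath p (x, 0) P)
    (hQ : IsLargePath (x + 2, 0) q Q) : IsLargePath p q (P ++ (2, 0) :: Q) := by
  rw [isLargePath_append, hP.2.2, isLargePath_cons]
  exact ⟨hP, by simp, le_rfl, by simpa using hQ⟩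

theorem IsLargePath.up_cons_append_down_cons (hP : IsLargePath p (x, 0) P)
    (hQ : IsLargePath (x + 2, 0) q Q) : IsLargePath p q ((1, 1) :: (P ++ (1, -1) :: Q)) := by
  have hP' := ((isLargePath_iff_lift 1).1 hP).1
  rw [isLargePath_cons, isLargePath_append, hP'.2.2, isLargePath_cons]
  refine ⟨by simp, hP.start_nonneg, hP', by simp, by simp, ?_⟩
  convert hQ using 1
  ext <;> simp only [Prod.fst_add, Prod.snd_add] <;> ring

theorem IsLargePath.one_le_of_append_down_cons (h : IsLargePath p q (P ++ (1, -1) :: Q)) :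
    1 ≤ (endpt p P).2 := by
  have := (isLargePath_cons.1 (isLargePath_append.1 h).2).2.2.start_nonneg
  simp only [Prod.snd_add] at this
  omega

theorem not_hasLevelStepOnAxis_up_cons_append_down_cons (hP : IsLargePath p (x, 0) P)
    (hQ : ¬HasLevelStepOnAxis (x + 2, 0) Q) :
    ¬HasLevelStepOnAxis p ((1, 1) :: (P ++ (1, -1) :: Q)) := by
  obtain ⟨hP', hP0⟩ := (isLargePath_iff_lift 1).1 hP
  simp only [hasLevelStepOnAxis_cons, hasLevelStepOnAxis_append, hP'.2.2, Prod.mk.injEq]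
  rintro (⟨⟨-, h⟩, -⟩ | hP | ⟨⟨h, -⟩, -⟩ | hQ')
  · omega
  · obtain ⟨w, hw, hw0⟩ := hP.exists_mem_pts
    exact hP0 w hw hw0
  · omega
  · exact hQ (by convert hQ' using 1; ext <;> simp only [Prod.fst_add, Prod.snd_add] <;> ring)

def LargeSmallPairs (p q : Pt) : Set (List Pt × List Pt) :=
  {PQ | ∃ x : ℤ, IsLargePath p (x, 0) PQ.1 ∧ IsSmallPath (x + 2, 0) q PQ.2}

theorem bijOn_levelSplice (p q : Pt) :
    Set.BijOn (fun PQ : List Pt × List Pt => PQ.1 ++ (2, 0) :: PQ.2) (LargeSmallPairs p q)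
      {l | IsLargePath p q l ∧ HasLevelStepOnAxis p l} := by
  refine ⟨?maps, ?inj, ?surj⟩
  case maps =>
    rintro ⟨P, Q⟩ ⟨x, hP, hQ⟩
    exact ⟨hP.append_level_cons hQ.1, P, Q, rfl, by rw [hP.2.2]⟩
  case inj =>
    have key : ∀ {P R Q Q'}, (P, R ++ (2, 0) :: Q) ∈ LargeSmallPairs p q →
        (P ++ (2, 0) :: R, Q') ∈ LargeSmallPairs p q → False := by
      rintro P R Q Q' ⟨x, hP, hQ⟩ ⟨_, hPR, -⟩
      refine (isSmallPath_iff.1 hQ).2 ⟨R, Q, rfl, ?_⟩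
      have := hPR.2.2
      rw [endpt_append, hP.2.2, endpt_cons] at this
      simpa using congrArg Prod.snd this
    rintro ⟨P, Q⟩ hPQ ⟨P', Q'⟩ hPQ' h
    dsimp only at h
    rcases List.append_cons_eq_append_cons h with ⟨rfl, rfl⟩ | ⟨R, rfl, rfl⟩ | ⟨R, rfl, rfl⟩
    · rfl
    · exact (key hPQ hPQ').elim
    · exact (key hPQ' hPQ).elim
  case surj =>
    rintro l ⟨hl, hlevel⟩
    obtain ⟨P, Q, rfl, hP0, hQ⟩ := hlevel.exists_last
    obtain ⟨hP, hLQ⟩ := isLargePath_append.1 hl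
    have hPx : endpt p P = ((endpt p P).1, 0) := Prod.ext rfl hP0
    rw [hPx] at hP hLQ hQ
    refine ⟨(P, Q), ⟨_, hP, isSmallPath_iff.2 ⟨?_, by simpa using hQ⟩⟩, rfl⟩
    simpa using (isLargePath_cons.1 hLQ).2.2

theorem IsSmallPath.exists_eq_up_cons (h : IsSmallPath p q l) (hp : p.2 = 0) (hpq : p ≠ q) :
    ∃ l', l = (1, 1) :: l' := by
  obtain ⟨hl, hlevel⟩ := isSmallPath_iff.1 h
  rcases l with _ | ⟨s, l'⟩
  · exact absurd (isLargePath_nil.1 hl).2 hpq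
  obtain ⟨hs, -, hl'⟩ := isLargePath_cons.1 hl
  rcases hs with rfl | rfl | rfl
  · exact ⟨l', rfl⟩
  · have := hl'.start_nonneg
    simp only [Prod.snd_add] at this
    omega
  · exact absurd (hasLevelStepOnAxis_cons.2 (Or.inl ⟨rfl, hp⟩)) hlevel

theorem bijOn_peakSplice (hp : p.2 = 0) (hq : q.2 = 0) (hpq : p ≠ q) :
    Set.BijOn (fun PQ : List Pt × List Pt => (1, 1) :: (PQ.1 ++ (1, -1) :: PQ.2))
      (LargeSmallPairs p q) {l | IsSmallPath p q l} := by
  refine ⟨?maps, ?inj, ?surj⟩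
  case maps =>
    rintro ⟨P, Q⟩ ⟨x, hP, hQ⟩
    rw [isSmallPath_iff] at hQ
    exact isSmallPath_iff.2 ⟨hP.up_cons_append_down_cons hQ.1,
      not_hasLevelStepOnAxis_up_cons_append_down_cons hP hQ.2⟩
  case inj =>
    have key : ∀ {P R Q Q'}, (P, Q) ∈ LargeSmallPairs p q →
        (P ++ (1, -1) :: R, Q') ∈ LargeSmallPairs p q → False := by
      rintro P R Q Q' ⟨_, hP, -⟩ ⟨_, hPR, -⟩
      have := hPR.one_le_of_append_down_cons
      rw [hP.2.2] at this
      exact absurd this (by norm_num)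
    rintro ⟨P, Q⟩ hPQ ⟨P', Q'⟩ hPQ' h
    simp only [List.cons.injEq, true_and] at h
    rcases List.append_cons_eq_append_cons h with ⟨rfl, rfl⟩ | ⟨R, rfl, -⟩ | ⟨R, rfl, -⟩
    · rfl
    · exact (key hPQ hPQ').elim
    · exact (key hPQ' hPQ).elim
  case surj =>
    intro l hl
    obtain ⟨l, rfl⟩ := IsSmallPath.exists_eq_up_cons hl hp hpq
    obtain ⟨hl, hlevel⟩ := isSmallPath_iff.1 hl
    have hl' := (isLargePath_cons.1 hl).2.2
    obtain ⟨P, Q, rfl, hP1, hP⟩ := hl'.exists_eq_append_down_cons (by simp [hp]) hq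
    set x := (endpt (p + (1, 1)) P).1 - 1
    have hPx : endpt (p + (1, 1)) P = (x, 0) + (1, 1) :=
      Prod.ext (by simp [x]) (by simpa using hP1)
    obtain ⟨hP', hDQ⟩ := isLargePath_append.1 hl'
    rw [hPx] at hP' hDQ
    have hxQ : ((x, 0) + (1, 1) + (1, -1) : Pt) = (x + 2, 0) := by simp; ring
    refine ⟨(P, Q), ⟨x, (isLargePath_iff_lift 1).2 ⟨hP', hP⟩, isSmallPath_iff.2 ⟨?_, ?_⟩⟩, rfl⟩
    · rw [← hxQ]
      exact (isLargePath_cons.1 hDQ).2.2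
    · intro hQ
      refine hlevel (hasLevelStepOnAxis_cons.2 (Or.inr (hasLevelStepOnAxis_append.2
        (Or.inr (hasLevelStepOnAxis_cons.2 (Or.inr ?_))))))
      rwa [hPx, hxQ]

theorem card_largePath_eq_two_mul_card_smallPath (hp : p.2 = 0) (hq : q.2 = 0) (hpq : p ≠ q) :
    Nat.card {l // IsLargePath p q l} = 2 * Nat.card {l // IsSmallPath p q l} := by
  classical
  have hsplit : {l | IsLargePath p q l} =
      {l | IsSmallPath p q l} ∪ {l | IsLargePath p q l ∧ HasLevelStepOnAxis p l} := by
    ext l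
    simp only [Set.mem_ofPred_eq, Set.mem_union, isSmallPath_iff]
    tauto
  have hdisj :
      Disjoint {l | IsSmallPath p q l} {l | IsLargePath p q l ∧ HasLevelStepOnAxis p l} :=
    Set.disjoint_left.2 fun _ hs hl => (isSmallPath_iff.1 hs).2 hl.2
  let e : {l // IsLargePath p q l} ≃ Bool × {l // IsSmallPath p q l} :=
    (Equiv.setCongr hsplit).trans <| (Equiv.Set.union hdisj).trans <|
      (Equiv.sumCongr (Equiv.refl _) (((bijOn_levelSplice p q).equiv _).symm.trans
        ((bijOn_peakSplice hp hq hpq).equiv _))).trans (Equiv.boolProdEquivSum _).symm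
  rw [Nat.card_congr e, Nat.card_prod, Nat.card_eq_fintype_card (α := Bool), Fintype.card_bool]

end

/-- For `n ≥ 1`, the `n`-th large Schröder number is twice the `n`-th small one. -/
theorem large_eq_two_mul_small (n : ℕ) (hn : 1 ≤ n) :
    schR n = 2 * schS n :=
  card_largePath_eq_two_mul_card_smallPath rfl rfl (by simp [Prod.ext_iff]; omega)
end

section
/- For n ≥ 1, det(H_n^{(0)}) = det(G_n^{(0)}), i.e., the shifted-by-zero Hankel determinants of the large and small Schröder numbers coincide. -/
open Matrix

/-!
The large and small Schröder numbers are the even moments of weighted Dyck paths in which a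
down step from height `g` has weight `2` when `g` is odd, resp. even: their Stieltjes continued
fractions have coefficients `2, 1, 2, 1, …` and `1, 2, 1, 2, …`. This follows from the
first-return decomposition of paths, which gives both families of generating functions the same
quadratic equations. Cutting a Dyck path of length `2i + 2j` after `2i` steps factors the Hankel
matrix of its moments as a lower unitriangular times an upper triangular matrix, so the
determinant is the product over `j < n` of the weights of the staircase descending from height
`2j`. That product is `2 ^ j` for both weight sequences.
-/

open PowerSeries Finset

theorem Finset.sum_range_two_mul_of_odd_eq_zero {M : Type*} [AddCommMonoid M] {f : ℕ → M}
    (hf : ∀ h, Odd h → f h = 0) (n : ℕ) :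
    ∑ h ∈ range (2 * n), f h = ∑ m ∈ range n, f (2 * m) := by
  induction n with
  | zero => simp
  | succ n ih =>
    rw [mul_add, mul_one, sum_range_succ, sum_range_succ, ih,
      hf (2 * n + 1) (odd_two_mul_add_one n), add_zero, sum_range_succ]

theorem PowerSeries.ideal_eq_bot_of_le_span_X_mul {R : Type*} [CommRing R] {I : Ideal R⟦X⟧}
    (hI : I ≤ Ideal.span {X} * I) : I = ⊥ := by
  have hpow : ∀ n, I ≤ Ideal.span {X ^ n} := by
    intro n
    induction n with
    | zero => simp
    | succ n ih =>
      calc I ≤ Ideal.span {X} * I := hI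
        _ ≤ Ideal.span {X} * Ideal.span {X ^ n} := Ideal.mul_mono_right ih
        _ = Ideal.span {X ^ (n + 1)} := by
          rw [Ideal.span_singleton_mul_span_singleton, pow_succ']
  refine (Submodule.eq_bot_iff I).mpr fun f hf => ?_
  ext n
  have hdvd : X ^ (n + 1) ∣ f := Ideal.mem_span_singleton.mp (hpow (n + 1) hf)
  simpa using X_pow_dvd_iff.mp hdvd n (Nat.lt_succ_self n)

theorem PowerSeries.eq_zero_of_eq_X_mul_mul {R : Type*} [CommRing R] {f g : R⟦X⟧}
    (h : f = X * (f * g)) : f = 0 := by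
  have hle : Ideal.span {f} ≤ Ideal.span {X} * Ideal.span {f} := by
    rw [Ideal.span_le, Set.singleton_subset_iff]
    have hmem : X * (f * g) ∈ Ideal.span {X} * Ideal.span {f} :=
      Ideal.mul_mem_mul (Ideal.mem_span_singleton_self X)
        (Ideal.mul_mem_right g _ (Ideal.mem_span_singleton_self f))
    rwa [← h] at hmem
  simpa using ideal_eq_bot_of_le_span_X_mul hle

theorem List.enatCard_subtype_eq_of_head {α : Type*} (Q : List α → Prop) {a b c : α}
    (hab : a ≠ b) (hac : a ≠ c) (hbc : b ≠ c)
    (hQ : ∀ s l, Q (s :: l) → s = a ∨ s = b ∨ s = c) :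
    ENat.card {l // Q l} = ENat.card {_u : Unit // Q []} + (ENat.card {l // Q (a :: l)} +
      (ENat.card {l // Q (b :: l)} + ENat.card {l // Q (c :: l)})) := by
  let f : {_u : Unit // Q []} ⊕
      ({l // Q (a :: l)} ⊕ ({l // Q (b :: l)} ⊕ {l // Q (c :: l)})) → {l // Q l}
    | .inl u => ⟨[], u.2⟩
    | .inr (.inl l) => ⟨a :: l.1, l.2⟩
    | .inr (.inr (.inl l)) => ⟨b :: l.1, l.2⟩
    | .inr (.inr (.inr l)) => ⟨c :: l.1, l.2⟩
  have hf : Function.Bijective f := by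
    constructor
    · rintro (_ | _ | _ | _) (_ | _ | _ | _) <;>
        simp_all [f, Subtype.ext_iff, hab.symm, hac.symm, hbc.symm]
    · rintro ⟨_ | ⟨s, l⟩, hl⟩
      · exact ⟨.inl ⟨(), hl⟩, rfl⟩
      · rcases hQ s l hl with rfl | rfl | rfl
        exacts [⟨.inr (.inl ⟨l, hl⟩), rfl⟩, ⟨.inr (.inr (.inl ⟨l, hl⟩)), rfl⟩,
          ⟨.inr (.inr (.inr ⟨l, hl⟩)), rfl⟩]
  simp only [← ENat.card_sum]
  exact (ENat.card_congr (Equiv.ofBijective f hf)).symm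

theorem Nat.card_eq_of_enatCard_eq {α : Type*} {n : ℕ} (h : ENat.card α = n) :
    Nat.card α = n := by
  have : Finite α := ENat.card_lt_top.mp (h ▸ ENat.natCast_lt_top n)
  exact_mod_cast (ENat.card_eq_coe_natCard α).symm.trans h

section WeightedPaths

variable {R S : Type*}

/-- The total weight of the lattice paths with steps `(1, 1)`, `(1, -1)` and `(2, 0)` that go from
height `h` to height `0` over a horizontal distance `t` without going below the axis, where a
down step from height `g` weighs `w g` and a level step at height `g` weighs `l g`. -/
def schroderWeight [CommSemiring R] (w l : ℕ → R) : ℕ → ℕ → R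
  | 0, h => if h = 0 then 1 else 0
  | t + 1, h => schroderWeight w l t (h + 1) +
      (match h with | 0 => 0 | g + 1 => w (g + 1) * schroderWeight w l t g) +
      (match t with | 0 => 0 | s + 1 => l h * schroderWeight w l s h)

section CommSemiring

variable [CommSemiring R] [CommSemiring S] (w l : ℕ → R)

theorem schroderWeight_succ (t h : ℕ) :
    schroderWeight w l (t + 1) h = schroderWeight w l t (h + 1) +
      (match h with | 0 => 0 | g + 1 => w (g + 1) * schroderWeight w l t g) +
      (match t with | 0 => 0 | s + 1 => l h * schroderWeight w l s h) := by
  rcases t with _ | s <;> rcases h with _ | g <;> rfl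

theorem map_schroderWeight (f : R →+* S) (t h : ℕ) :
    f (schroderWeight w l t h) = schroderWeight (f ∘ w) (f ∘ l) t h := by
  induction t using Nat.strong_induction_on generalizing h with | _ t ih
  rcases t with _ | _ | s
  · simp only [schroderWeight]
    split_ifs <;> simp
  · rcases h with _ | g <;> simp [schroderWeight, apply_ite f]
  · rcases h with _ | g <;> simp [schroderWeight, ih s, ih (s + 1)]

theorem schroderWeight_eq_zero_of_lt {t h : ℕ} (hth : t < h) : schroderWeight w l t h = 0 := by
  induction t using Nat.strong_induction_on generalizing h with | _ t ih
  obtain ⟨g, rfl⟩ : ∃ g, h = g + 1 := ⟨h - 1, by omega⟩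
  rcases t with _ | _ | s
  · simp [schroderWeight]
  · simp [schroderWeight, show g ≠ 0 by omega]
  · simp [schroderWeight, ih s (by omega) (show s < g + 1 by omega),
      ih (s + 1) (by omega) (show s + 1 < g by omega),
      ih (s + 1) (by omega) (show s + 1 < g + 2 by omega)]

theorem schroderWeight_self (t : ℕ) : schroderWeight w l t t = ∏ g ∈ range t, w (g + 1) := by
  induction t with
  | zero => simp [schroderWeight]
  | succ t ih =>
    rcases t with _ | s
    · simp [schroderWeight]
    · simp [schroderWeight, ih, prod_range_succ,
        schroderWeight_eq_zero_of_lt w l (show s + 1 < s + 1 + 1 + 1 by omega),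
        schroderWeight_eq_zero_of_lt w l (show s < s + 1 + 1 by omega), mul_comm]

def schroderSeries (h : ℕ) : R⟦X⟧ := PowerSeries.mk fun t => schroderWeight w l t h

@[simp]
theorem coeff_schroderSeries (t h : ℕ) :
    coeff t (schroderSeries w l h) = schroderWeight w l t h :=
  coeff_mk _ _

theorem schroderSeries_zero_eq_first_step :
    schroderSeries w l 0 =
      1 + X * schroderSeries w l 1 + X ^ 2 * C (l 0) * schroderSeries w l 0 := by
  ext (_ | _ | t) <;> simp [schroderSeries, schroderWeight, pow_succ, mul_assoc, coeff_one]

theorem schroderSeries_succ_eq_first_step (h : ℕ) :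
    schroderSeries w l (h + 1) = X * schroderSeries w l (h + 2) +
      X * C (w (h + 1)) * schroderSeries w l h +
        X ^ 2 * C (l (h + 1)) * schroderSeries w l (h + 1) := by
  ext (_ | _ | t) <;> simp [schroderSeries, schroderWeight, pow_succ, mul_assoc]

/-- The total weight of the Dyck paths from height `0` to height `h` in `t` steps, where a down
step from height `g` weighs `w g`. -/
def dyckPrefixWeight : ℕ → ℕ → R
  | 0, h => if h = 0 then 1 else 0
  | t + 1, h => (match h with | 0 => 0 | g + 1 => dyckPrefixWeight t g) +
      w (h + 1) * dyckPrefixWeight t (h + 1)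

theorem dyckPrefixWeight_eq_zero_of_lt {t h : ℕ} (hth : t < h) : dyckPrefixWeight w t h = 0 := by
  induction t generalizing h with
  | zero => simp [dyckPrefixWeight, hth.ne']
  | succ t ih =>
    obtain ⟨g, rfl⟩ : ∃ g, h = g + 1 := ⟨h - 1, by omega⟩
    simp [dyckPrefixWeight, ih (show t < g by omega), ih (show t < g + 2 by omega)]

theorem dyckPrefixWeight_self (t : ℕ) : dyckPrefixWeight w t t = 1 := by
  induction t with
  | zero => simp [dyckPrefixWeight]
  | succ t ih =>
    simp [dyckPrefixWeight, ih, dyckPrefixWeight_eq_zero_of_lt w (show t < t + 2 by omega)]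

theorem dyckPrefixWeight_eq_zero_of_odd {t h : ℕ} (hth : Odd (t + h)) :
    dyckPrefixWeight w t h = 0 := by
  induction t generalizing h with
  | zero => simp [dyckPrefixWeight, show h ≠ 0 by rintro rfl; simp at hth]
  | succ t ih =>
    have h1 : Odd (t + (h + 1)) := by rwa [← add_assoc, add_right_comm]
    rcases h with _ | g
    · simp [dyckPrefixWeight, ih h1]
    · have h2 : Odd (t + g) := by simpa [Nat.odd_add_one, add_assoc, parity_simps] using hth
      simp [dyckPrefixWeight, ih h1, ih h2]

theorem sum_dyckPrefixWeight_mul_schroderWeight {t N : ℕ} (hN : t < N) (u : ℕ) :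
    ∑ h ∈ range N, dyckPrefixWeight w t h * schroderWeight w 0 u h =
      schroderWeight w 0 (t + u) 0 := by
  obtain ⟨M, rfl⟩ : ∃ M, N = M + 1 := ⟨N - 1, by omega⟩
  induction t generalizing u with
  | zero => simp [dyckPrefixWeight]
  | succ t ih =>
    have hup : ∑ h ∈ range (M + 1),
        (match h with | 0 => 0 | g + 1 => dyckPrefixWeight w t g) * schroderWeight w 0 u h =
          ∑ g ∈ range (M + 1), dyckPrefixWeight w t g * schroderWeight w 0 u (g + 1) := by
      rw [sum_range_succ', sum_range_succ _ M,
        dyckPrefixWeight_eq_zero_of_lt w (show t < M by omega)]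
      simp
    have hdown : ∑ h ∈ range (M + 1),
        w (h + 1) * dyckPrefixWeight w t (h + 1) * schroderWeight w 0 u h =
          ∑ g ∈ range (M + 1), dyckPrefixWeight w t g *
            (match g with | 0 => 0 | g + 1 => w (g + 1) * schroderWeight w 0 u g) := by
      rw [sum_range_succ, sum_range_succ' _ M,
        dyckPrefixWeight_eq_zero_of_lt w (show t < M + 1 by omega)]
      simp only [zero_mul, mul_zero, add_zero]
      exact sum_congr rfl fun g _ => by ring
    have hstep : ∀ g, schroderWeight w 0 (u + 1) g = schroderWeight w 0 u (g + 1) +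
        (match g with | 0 => 0 | g + 1 => w (g + 1) * schroderWeight w 0 u g) := by
      intro g
      rcases u with _ | u <;> simp [schroderWeight]
    rw [show t + 1 + u = t + (u + 1) by ring, ← ih (u + 1) (by omega)]
    simp only [dyckPrefixWeight, hstep, add_mul, mul_add, sum_add_distrib, hup, hdown]

end CommSemiring

section CommRing

variable [CommRing R] (w l : ℕ → R)

theorem schroderSeries_succ_eq_first_return (h : ℕ) :
    schroderSeries w l (h + 1) = X * C (w 1) *
      schroderSeries (fun g => w (g + 1)) (fun g => l (g + 1)) h * schroderSeries w l 0 := by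
  set F := schroderSeries w l
  set F' := schroderSeries (fun g => w (g + 1)) (fun g => l (g + 1))
  set D : ℕ → R⟦X⟧ := fun h => F (h + 1) - X * C (w 1) * F' h * F 0 with hD
  have hmem : ∀ h, D h ∈ Ideal.span (Set.range D) := fun h => Ideal.subset_span ⟨h, rfl⟩
  -- The first-step recursions of `F` and `F'` make each defect `D h` a multiple of `X` by an
  -- element of the ideal generated by all of them.
  have hle : Ideal.span (Set.range D) ≤ Ideal.span {X} * Ideal.span (Set.range D) := by
    rw [Ideal.span_le]
    rintro _ ⟨h, rfl⟩
    rcases h with _ | g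
    · have hD0 : D 0 = X * (D 1 + X * C (l 1) * D 0) := by
        simp only [hD]
        linear_combination schroderSeries_succ_eq_first_step w l 0 -
          X * C (w 1) * F 0 *
            schroderSeries_zero_eq_first_step (fun g => w (g + 1)) (fun g => l (g + 1))
      rw [hD0]
      exact Ideal.mul_mem_mul (Ideal.mem_span_singleton_self X)
        (add_mem (hmem 1) (Ideal.mul_mem_left _ _ (hmem 0)))
    · have hDg : D (g + 1) =
          X * (D (g + 2) + C (w (g + 2)) * D g + X * C (l (g + 2)) * D (g + 1)) := by
        simp only [hD]
        linear_combination schroderSeries_succ_eq_first_step w l (g + 1) -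
          X * C (w 1) * F 0 *
            schroderSeries_succ_eq_first_step (fun g => w (g + 1)) (fun g => l (g + 1)) g
      rw [hDg]
      exact Ideal.mul_mem_mul (Ideal.mem_span_singleton_self X)
        (add_mem (add_mem (hmem _) (Ideal.mul_mem_left _ _ (hmem g)))
          (Ideal.mul_mem_left _ _ (hmem _)))
  have hbot := ideal_eq_bot_of_le_span_X_mul hle
  exact sub_eq_zero.mp (by simpa [hbot] using hmem h)

theorem schroderSeries_zero_eq :
    schroderSeries w l 0 = 1 + X ^ 2 * C (w 1) *
      schroderSeries (fun g => w (g + 1)) (fun g => l (g + 1)) 0 * schroderSeries w l 0 +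
        X ^ 2 * C (l 0) * schroderSeries w l 0 := by
  linear_combination schroderSeries_zero_eq_first_step w l +
    X * schroderSeries_succ_eq_first_return w l 0

theorem det_hankel_schroderWeight (n : ℕ) :
    (Matrix.of fun i j : Fin n => schroderWeight w 0 (2 * (i + j)) 0).det =
      ∏ j : Fin n, ∏ g ∈ range (2 * j), w (g + 1) := by
  set A := Matrix.of fun i m : Fin n => dyckPrefixWeight w (2 * i) (2 * m)
  set B := Matrix.of fun m j : Fin n => schroderWeight w 0 (2 * j) (2 * m)
  have hAB : (Matrix.of fun i j : Fin n => schroderWeight w 0 (2 * (i + j)) 0) = A * B := by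
    ext i j
    have hodd : ∀ h, Odd h → dyckPrefixWeight w (2 * i) h * schroderWeight w 0 (2 * j) h = 0 :=
      fun h hh => by rw [dyckPrefixWeight_eq_zero_of_odd w ((even_two_mul _).add_odd hh), zero_mul]
    rw [Matrix.mul_apply, Matrix.of_apply, mul_add,
      ← sum_dyckPrefixWeight_mul_schroderWeight w (show 2 * (i : ℕ) < 2 * n by omega),
      sum_range_two_mul_of_odd_eq_zero hodd, ← Fin.sum_univ_eq_sum_range]
    rfl
  have hA : A.det = 1 := by
    rw [Matrix.det_of_isLowerTriangular A fun i m (him : i < m) =>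
      dyckPrefixWeight_eq_zero_of_lt w (by omega)]
    simp [A, dyckPrefixWeight_self]
  have hB : B.det = ∏ j : Fin n, ∏ g ∈ range (2 * j), w (g + 1) := by
    rw [Matrix.det_of_isUpperTriangular (M := B) fun m j (hjm : j < m) =>
      schroderWeight_eq_zero_of_lt w 0 (by have : (j : ℕ) < m := hjm; omega)]
    simp [B, schroderWeight_self]
  rw [hAB, Matrix.det_mul, hA, hB, one_mul]

end CommRing

end WeightedPaths

/-- Large Schröder paths whose level steps all start at heights satisfying `ok`;
`IsSmallPath` is `IsSchroderPath (· ≠ 0)` by definition. -/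
def IsSchroderPath (ok : ℤ → Prop) (p q : Pt) (l : List Pt) : Prop :=
  IsLargePath p q l ∧
    ∀ (i : ℕ) (h : i < l.length), l.get ⟨i, h⟩ = (2, 0) → ok (endpt p (l.take i)).2

section SchroderPath

variable {ok : ℤ → Prop} {p q s : Pt} {l : List Pt}

theorem isLargePath_iff_isSchroderPath :
    IsLargePath p q l ↔ IsSchroderPath (fun _ => True) p q l := by
  simp [IsSchroderPath]

theorem isSchroderPath_nil : IsSchroderPath ok p q [] ↔ 0 ≤ p.2 ∧ p = q := by
  simp [IsSchroderPath, IsLargePath, pts, endpt]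

theorem isSchroderPath_cons : IsSchroderPath ok p q (s :: l) ↔
    0 ≤ p.2 ∧ (s = (1, 1) ∨ s = (1, -1) ∨ s = (2, 0)) ∧ (s = (2, 0) → ok p.2) ∧
      IsSchroderPath ok (p + s) q l := by
  simp only [IsSchroderPath, IsLargePath, pts, endpt, List.scanl_cons, List.foldl_cons,
    List.forall_mem_cons, List.length_cons]
  constructor
  · rintro ⟨⟨⟨hs, hl⟩, ⟨hp, hpts⟩, hq⟩, hok⟩
    exact ⟨hp, hs, fun hsL => by simpa using hok 0 (by omega) (by simpa using hsL),
      ⟨hl, hpts, hq⟩,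
      fun i hi hget => by simpa using hok (i + 1) (by omega) (by simpa using hget)⟩
  · rintro ⟨hp, hs, hsL, ⟨hl, hpts, hq⟩, hok⟩
    refine ⟨⟨⟨hs, hl⟩, ⟨hp, hpts⟩, hq⟩, fun i hi hget => ?_⟩
    rcases i with _ | i
    · simpa using hsL (by simpa using hget)
    · simpa using hok i (by omega) (by simpa using hget)

theorem IsSchroderPath.nonneg (hl : IsSchroderPath ok p q l) : 0 ≤ p.2 := by
  cases l with
  | nil => exact (isSchroderPath_nil.1 hl).1
  | cons s l => exact (isSchroderPath_cons.1 hl).1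

theorem IsSchroderPath.fst_le (hl : IsSchroderPath ok p q l) : p.1 ≤ q.1 := by
  induction l generalizing p with
  | nil => rw [(isSchroderPath_nil.1 hl).2]
  | cons s l ih =>
    obtain ⟨-, hs, -, hl⟩ := isSchroderPath_cons.1 hl
    have := ih hl
    rcases hs with rfl | rfl | rfl <;> simp at this <;> omega

theorem enatCard_isSchroderPath_eq_zero (hpq : q.1 < p.1 ∨ p.2 < 0) :
    ENat.card {l // IsSchroderPath ok p q l} = 0 := by
  rw [ENat.card_eq_zero_iff_empty]
  refine ⟨fun ⟨l, hl⟩ => ?_⟩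
  have := hl.fst_le
  have := hl.nonneg
  omega

theorem enatCard_isSchroderPath_nil (hp : 0 ≤ p.2) [Decidable (p = q)] :
    ENat.card {_u : Unit // IsSchroderPath ok p q []} = if p = q then 1 else 0 := by
  split_ifs with hpq
  · subst hpq
    simp [isSchroderPath_nil, hp]
  · simp [isSchroderPath_nil, hpq]

theorem enatCard_isSchroderPath_up (hp : 0 ≤ p.2) :
    ENat.card {l // IsSchroderPath ok p q ((1, 1) :: l)} =
      ENat.card {l // IsSchroderPath ok (p + (1, 1)) q l} :=
  ENat.card_congr (Equiv.subtypeEquivRight fun l => by simp [isSchroderPath_cons, hp])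

theorem enatCard_isSchroderPath_down (hp : 0 ≤ p.2) :
    ENat.card {l // IsSchroderPath ok p q ((1, -1) :: l)} =
      ENat.card {l // IsSchroderPath ok (p + (1, -1)) q l} :=
  ENat.card_congr (Equiv.subtypeEquivRight fun l => by simp [isSchroderPath_cons, hp])

theorem enatCard_isSchroderPath_level (hp : 0 ≤ p.2) [Decidable (ok p.2)] :
    ENat.card {l // IsSchroderPath ok p q ((2, 0) :: l)} =
      if ok p.2 then ENat.card {l // IsSchroderPath ok (p + (2, 0)) q l} else 0 := by
  split_ifs with hok
  · exact ENat.card_congr (Equiv.subtypeEquivRight fun l => by simp [isSchroderPath_cons, hp, hok])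
  · rw [ENat.card_eq_zero_iff_empty]
    exact ⟨fun ⟨l, hl⟩ => hok ((isSchroderPath_cons.1 hl).2.2.1 rfl)⟩

end SchroderPath

theorem enatCard_isSchroderPath (ok : ℤ → Prop) [DecidablePred ok] {t h : ℕ} {p q : Pt}
    (hp : p.2 = h) (hq : q = (p.1 + t, 0)) :
    ENat.card {l // IsSchroderPath ok p q l} =
      schroderWeight 1 (fun g : ℕ => if ok g then 1 else 0) t h := by
  induction t using Nat.strong_induction_on generalizing h p q with | _ t ih
  have hp0 : 0 ≤ p.2 := by omega
  rw [List.enatCard_subtype_eq_of_head _ (by decide) (by decide) (by decide)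
      fun s l hl => (isSchroderPath_cons.1 hl).2.1, enatCard_isSchroderPath_nil hp0,
    enatCard_isSchroderPath_up hp0, enatCard_isSchroderPath_down hp0,
    enatCard_isSchroderPath_level hp0]
  subst hq
  rcases t with _ | s
  · simp [schroderWeight, enatCard_isSchroderPath_eq_zero, Prod.ext_iff, hp]
  · have hpq : p ≠ (p.1 + ↑(s + 1), 0) := fun h => by simp [Prod.ext_iff] at h; omega
    rw [if_neg hpq, zero_add, schroderWeight_succ, add_assoc,
      ih s (by omega) (h := h + 1) (p := p + (1, 1)) (by simp [hp]) (by simp; ring)]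
    congr 2
    · rcases h with _ | g
      · exact enatCard_isSchroderPath_eq_zero (Or.inr (by simp [hp]))
      · rw [ih s (by omega) (h := g) (by simp [hp]) (by simp; ring)]
        simp
    · rcases s with _ | r
      · simp [enatCard_isSchroderPath_eq_zero]
      · rw [ih r (by omega) (h := h) (by simp [hp]) (by simp; ring), hp]
        split_ifs <;> simp

theorem natCard_isSchroderPath (ok : ℤ → Prop) [DecidablePred ok] (k : ℕ) :
    (Nat.card {l // IsSchroderPath ok (0, 0) (2 * k, 0) l} : ℤ) =
      schroderWeight 1 (fun g : ℕ => if ok g then 1 else 0) (2 * k) 0 := by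
  have hcast : ∀ {S : Type} [CommSemiring S], (Nat.cast (schroderWeight (1 : ℕ → ℕ)
      (fun g : ℕ => if ok g then 1 else 0) (2 * k) 0) : S) =
        schroderWeight 1 (fun g : ℕ => if ok g then 1 else 0) (2 * k) 0 := by
    intro S _
    rw [← Nat.coe_castRingHom, map_schroderWeight]
    congr 1 <;> ext g
    · simp
    · by_cases hg : ok g <;> simp [hg]
  rw [Nat.card_eq_of_enatCard_eq ((enatCard_isSchroderPath ok (t := 2 * k) (p := (0, 0))
    (q := (2 * k, 0)) rfl (by simp)).trans hcast.symm), hcast]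

theorem schR_eq_schroderWeight (k : ℕ) : (schR k : ℤ) = schroderWeight 1 1 (2 * k) 0 := by
  rw [schR, Nat.card_congr (Equiv.subtypeEquivRight fun l => isLargePath_iff_isSchroderPath),
    natCard_isSchroderPath]
  simp [Pi.one_def]

theorem schS_eq_schroderWeight (k : ℕ) :
    (schS k : ℤ) = schroderWeight 1 (fun g => if g = 0 then 0 else 1) (2 * k) 0 := by
  have h := natCard_isSchroderPath (· ≠ 0) k
  simp only [ne_eq, Nat.cast_eq_zero, ite_not] at h
  exact h

/-- Down-step weights `2, 1, 2, 1, …` from heights `1, 2, 3, …`: the Stieltjes continued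
fraction coefficients of the large Schröder numbers. -/
def twoOnOdd (g : ℕ) : ℤ := if Odd g then 2 else 1

/-- The coefficients `1, 2, 1, 2, …` of the small Schröder numbers. -/
def twoOnEven (g : ℕ) : ℤ := if Even g then 2 else 1

theorem twoOnOdd_succ : (fun g => twoOnOdd (g + 1)) = twoOnEven := by
  ext g
  simp [twoOnOdd, twoOnEven, Nat.odd_add_one]

theorem twoOnEven_succ : (fun g => twoOnEven (g + 1)) = twoOnOdd := by
  ext g
  simp [twoOnOdd, twoOnEven, Nat.even_add_one]

theorem prod_range_two_mul_twoOnOdd (j : ℕ) :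
    ∏ g ∈ range (2 * j), twoOnOdd (g + 1) = 2 ^ j := by
  induction j with
  | zero => simp
  | succ j ih =>
    rw [mul_add, mul_one, prod_range_succ, prod_range_succ, ih, pow_succ]
    simp [twoOnOdd, Nat.odd_add_one, parity_simps]

theorem prod_range_two_mul_twoOnEven (j : ℕ) :
    ∏ g ∈ range (2 * j), twoOnEven (g + 1) = 2 ^ j := by
  induction j with
  | zero => simp
  | succ j ih =>
    rw [mul_add, mul_one, prod_range_succ, prod_range_succ, ih, pow_succ]
    simp [twoOnEven, parity_simps]

theorem schroderSeries_twoOnOdd_eq : schroderSeries twoOnOdd 0 0 =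
    1 + 2 * X ^ 2 * schroderSeries twoOnEven 0 0 * schroderSeries twoOnOdd 0 0 := by
  have h := schroderSeries_zero_eq twoOnOdd 0
  rw [twoOnOdd_succ] at h
  simp only [twoOnOdd, odd_one, ↓reduceIte, eq_intCast, Int.cast_ofNat, Pi.zero_apply,
    ← Pi.zero_def, map_zero, mul_zero, zero_mul, add_zero] at h
  linear_combination h

theorem schroderSeries_twoOnEven_eq : schroderSeries twoOnEven 0 0 =
    1 + X ^ 2 * schroderSeries twoOnOdd 0 0 * schroderSeries twoOnEven 0 0 := by
  have h := schroderSeries_zero_eq twoOnEven 0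
  rw [twoOnEven_succ] at h
  simp only [twoOnEven, Nat.not_even_one, ↓reduceIte, eq_intCast, Int.cast_one, mul_one,
    Pi.zero_apply, ← Pi.zero_def, map_zero, mul_zero, zero_mul, add_zero] at h
  linear_combination h

theorem schroderSeries_one_one_eq_twoOnOdd :
    schroderSeries (1 : ℕ → ℤ) 1 0 = schroderSeries twoOnOdd 0 0 := by
  set L := schroderSeries (1 : ℕ → ℤ) 1 0
  set D := schroderSeries twoOnOdd 0 0
  have hL := schroderSeries_zero_eq (1 : ℕ → ℤ) 1
  simp only [Pi.one_apply, ← Pi.one_def, map_one, mul_one] at hL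
  -- The Dyck system gives `D + 1 = 2 * schroderSeries twoOnEven 0 0`, which turns it into the
  -- quadratic equation satisfied by `L`.
  have hD : D = 1 + X ^ 2 * D * D + X ^ 2 * D := by
    linear_combination (1 - X ^ 2 * D) * schroderSeries_twoOnOdd_eq +
      2 * X ^ 2 * D * schroderSeries_twoOnEven_eq
  exact sub_eq_zero.mp
    (eq_zero_of_eq_X_mul_mul (g := X * (L + D + 1)) (by linear_combination hL - hD))

theorem schroderSeries_small_eq_twoOnEven :
    schroderSeries (1 : ℕ → ℤ) (fun g => if g = 0 then 0 else 1) 0 =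
      schroderSeries twoOnEven 0 0 := by
  have hS := schroderSeries_zero_eq (1 : ℕ → ℤ) (fun g => if g = 0 then 0 else 1)
  simp only [Pi.one_apply, ← Pi.one_def, eq_intCast, Int.cast_one, Int.cast_zero, mul_one,
    Nat.add_eq_zero_iff, one_ne_zero, and_false, ↓reduceIte, mul_zero, zero_mul, add_zero,
    schroderSeries_one_one_eq_twoOnOdd] at hS
  exact sub_eq_zero.mp (eq_zero_of_eq_X_mul_mul (g := X * schroderSeries twoOnOdd 0 0)
    (by linear_combination hS - schroderSeries_twoOnEven_eq))

theorem schR_eq_schroderWeight_twoOnOdd (k : ℕ) :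
    (schR k : ℤ) = schroderWeight twoOnOdd 0 (2 * k) 0 := by
  rw [schR_eq_schroderWeight, ← coeff_schroderSeries, schroderSeries_one_one_eq_twoOnOdd,
    coeff_schroderSeries]

theorem schS_eq_schroderWeight_twoOnEven (k : ℕ) :
    (schS k : ℤ) = schroderWeight twoOnEven 0 (2 * k) 0 := by
  rw [schS_eq_schroderWeight, ← coeff_schroderSeries, schroderSeries_small_eq_twoOnEven,
    coeff_schroderSeries]

theorem hankel_shift_large_eq_small_general (n : ℕ) :
    (Matrix.of fun i j : Fin n => (schR ((i : ℕ) + (j : ℕ)) : ℤ)).det =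
      (Matrix.of fun i j : Fin n => (schS ((i : ℕ) + (j : ℕ)) : ℤ)).det := by
  simp only [schR_eq_schroderWeight_twoOnOdd, schS_eq_schroderWeight_twoOnEven,
    det_hankel_schroderWeight, prod_range_two_mul_twoOnOdd, prod_range_two_mul_twoOnEven]

/-- For `n ≥ 1`, `det H_n^{(0)} = det G_n^{(0)}`. -/
theorem hankel_shift_large_eq_small (n : ℕ) (hn : 1 ≤ n) :
    (Matrix.of fun i j : Fin n => (schR ((i : ℕ) + (j : ℕ)) : ℤ)).det =
      (Matrix.of fun i j : Fin n => (schS ((i : ℕ) + (j : ℕ)) : ℤ)).det :=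
  hankel_shift_large_eq_small_general n
end
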